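/- arXiv:1707.08321 — 8 statements merged into one kernel-verified Lean document; each statement's English description precedes it below -/
import Mathlib

section
/- Let V, V', V'' be symplectic vector spaces over a field k. If L is a Lagrangian subspace of V̄ ⊕ V' and M is a Lagrangian subspace of V̄' ⊕ V'', then the relational composite M∘L = {(u,w) : ∃ v ∈ V', (u,v) ∈ L and (v,w) ∈ M} is a Lagrangian subspace of V̄ ⊕ V''. (Thus linear Lagrangian relations are closed under composition.) -/
open Module

/-- A subspace is isotropic for a bilinear form if the form vanishes on it. -/
def IsIsotropic {k V : Type*} [Field k] [AddCommGroup V] [Module k V]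
    (ω : LinearMap.BilinForm k V) (L : Submodule k V) : Prop :=
  ∀ u ∈ L, ∀ v ∈ L, ω u v = 0

/-- A subspace is Lagrangian if it is isotropic and of half the total dimension. -/
def IsLagrangian {k V : Type*} [Field k] [AddCommGroup V] [Module k V]
    (ω : LinearMap.BilinForm k V) (L : Submodule k V) : Prop :=
  IsIsotropic ω L ∧ 2 * Module.finrank k ↥L = Module.finrank k V

/-- The direct sum form (ω ⊕ ω')((u,u'),(v,v')) = ω(u,v) + ω'(u',v'). -/
def prodForm {k V W : Type*} [Field k] [AddCommGroup V] [Module k V]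
    [AddCommGroup W] [Module k W]
    (ωV : LinearMap.BilinForm k V) (ωW : LinearMap.BilinForm k W) :
    LinearMap.BilinForm k (V × W) :=
  ωV.comp (LinearMap.fst k V W) (LinearMap.fst k V W) +
  ωW.comp (LinearMap.snd k V W) (LinearMap.snd k V W)

/-! The composite `M ∘ L` is the image of the fibre product `L ×_{V'} M` under
`((u, v), (v, w)) ↦ (u, w)`. With `P = pr₂ L`, `Q = pr₁ M` and
`K = {v | (0, v) ∈ L ∧ (v, 0) ∈ M}`, rank–nullity applied twice gives
`dim (M ∘ L) + dim (P + Q) + dim K = dim L + dim M`, whatever `L` and `M` are.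
A Lagrangian subspace is its own orthogonal, which identifies `K` with `(P + Q)^⊥` in `V'`;
hence `dim (M ∘ L) = dim L + dim M - dim V' = (dim V + dim V'') / 2`.
Isotropy of `M ∘ L` is a direct computation: the two middle terms cancel. -/

open LinearMap

def Submodule.relComp {R U V W : Type*} [Semiring R] [AddCommMonoid U] [Module R U]
    [AddCommMonoid V] [Module R V] [AddCommMonoid W] [Module R W] (L : Submodule R (U × V))
    (M : Submodule R (V × W)) : Submodule R (U × W) where
  carrier := {p | ∃ v, (p.1, v) ∈ L ∧ (v, p.2) ∈ M}
  add_mem' := by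
    rintro _ _ ⟨v, hvL, hvM⟩ ⟨v', hvL', hvM'⟩
    exact ⟨v + v', L.add_mem hvL hvL', M.add_mem hvM hvM'⟩
  zero_mem' := ⟨0, L.zero_mem, M.zero_mem⟩
  smul_mem' := by
    rintro c _ ⟨v, hvL, hvM⟩
    exact ⟨c • v, L.smul_mem c hvL, M.smul_mem c hvM⟩

section Ring

variable {R U V W : Type*} [Ring R] [AddCommGroup U] [Module R U] [AddCommGroup V] [Module R V]
  [AddCommGroup W] [Module R W] (L : Submodule R (U × V)) (M : Submodule R (V × W))

-- `(snd.coprod (-fst)) ((u, v), (v', w)) = v - v'`, so its kernel cuts out the fibre product.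
theorem relComp_eq_map :
    L.relComp M = (L.prod M ⊓ ker ((snd R U V).coprod (-fst R V W))).map
      ((fst R U V).prodMap (snd R V W)) := by
  ext ⟨u, w⟩
  constructor
  · rintro ⟨v, hvL, hvM⟩
    exact ⟨((u, v), (v, w)), ⟨⟨hvL, hvM⟩, by simp⟩, rfl⟩
  · rintro ⟨⟨⟨u', v⟩, ⟨v', w'⟩⟩, ⟨⟨hL, hM⟩, hv⟩, hx⟩
    obtain rfl : v = v' := sub_eq_zero.mp (by simpa [sub_eq_add_neg] using hv)
    obtain ⟨rfl, rfl⟩ := Prod.ext_iff.mp hx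
    exact ⟨v, hL, hM⟩

theorem map_coprod_neg_fst_prod :
    (L.prod M).map ((snd R U V).coprod (-fst R V W)) = L.map (snd R U V) ⊔ M.map (fst R V W) := by
  rw [coprod_map_prod, Submodule.map_neg]

theorem prod_inf_ker_inf_ker :
    L.prod M ⊓ ker ((snd R U V).coprod (-fst R V W)) ⊓ ker ((fst R U V).prodMap (snd R V W)) =
      (L.comap (inr R U V) ⊓ M.comap (inl R V W)).map ((inr R U V).prod (inl R V W)) := by
  ext ⟨⟨u, v⟩, ⟨v', w⟩⟩
  simp only [Submodule.mem_inf, Submodule.mem_prod, mem_ker, coprod_apply, prodMap_apply,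
    Submodule.mem_map, Submodule.mem_comap, prod_apply, coe_inr, coe_inl, fst_apply, snd_apply,
    LinearMap.neg_apply, add_neg_eq_zero, Prod.mk_eq_zero, Function.prod, Prod.mk.injEq]
  constructor
  · rintro ⟨⟨⟨hL, hM⟩, rfl⟩, ⟨rfl, rfl⟩⟩
    exact ⟨v, ⟨hL, hM⟩, ⟨rfl, rfl⟩, rfl, rfl⟩
  · rintro ⟨v, ⟨hL, hM⟩, ⟨rfl, rfl⟩, rfl, rfl⟩
    exact ⟨⟨⟨hL, hM⟩, rfl⟩, rfl, rfl⟩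

end Ring

section DivisionRing

variable {k U V W : Type*} [DivisionRing k] [AddCommGroup U] [Module k U] [AddCommGroup V]
  [Module k V] [AddCommGroup W] [Module k W]

theorem Submodule.finrank_map_add_finrank_inf_ker [FiniteDimensional k U] (f : U →ₗ[k] V)
    (p : Submodule k U) : finrank k (p.map f) + finrank k ↥(p ⊓ ker f) = finrank k p := by
  have H := finrank_range_add_finrank_ker (f.domRestrict p)
  rw [range_domRestrict, ker_domRestrict] at H
  have e := (Submodule.equivMapOfInjective p.subtype p.injective_subtype
      ((ker f).comap p.subtype)).finrank_eq
  rw [Submodule.map_comap_subtype] at e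
  omega

theorem Submodule.finrank_prod [FiniteDimensional k U] [FiniteDimensional k V] (p : Submodule k U)
    (q : Submodule k V) : finrank k (p.prod q) = finrank k p + finrank k q := by
  rw [← range_subtype p, ← range_subtype q, ← range_prodMap, finrank_range_of_inj
    (Prod.map_injective.mpr ⟨p.injective_subtype, q.injective_subtype⟩), range_subtype,
    range_subtype, Module.finrank_prod]

theorem finrank_relComp_add [FiniteDimensional k U] [FiniteDimensional k V]
    [FiniteDimensional k W] (L : Submodule k (U × V)) (M : Submodule k (V × W)) :
    finrank k (L.relComp M) + finrank k ↥(L.map (snd k U V) ⊔ M.map (fst k V W)) +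
        finrank k ↥(L.comap (inr k U V) ⊓ M.comap (inl k V W)) =
      finrank k L + finrank k M := by
  have hj : Function.Injective ((inr k U V).prod (inl k V W)) := fun _ _ h ↦
    (Prod.ext_iff.mp (congrArg Prod.fst h)).2
  have e₁ := (L.prod M).finrank_map_add_finrank_inf_ker ((snd k U V).coprod (-fst k V W))
  have e₂ := (L.prod M ⊓ ker ((snd k U V).coprod (-fst k V W))).finrank_map_add_finrank_inf_ker
    ((fst k U V).prodMap (snd k V W))
  rw [map_coprod_neg_fst_prod, Submodule.finrank_prod] at e₁
  rw [← relComp_eq_map, prod_inf_ker_inf_ker,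
    ← (Submodule.equivMapOfInjective _ hj _).finrank_eq] at e₂
  omega

end DivisionRing

section Forms

variable {k U V W : Type*} [Field k] [AddCommGroup U] [Module k U] [AddCommGroup V] [Module k V]
  [AddCommGroup W] [Module k W] {ωU : LinearMap.BilinForm k U} {ωV : LinearMap.BilinForm k V}
  {ωW : LinearMap.BilinForm k W}

@[simp]
theorem prodForm_apply (ωV : LinearMap.BilinForm k V) (ωW : LinearMap.BilinForm k W)
    (p q : V × W) :
    prodForm ωV ωW p q = ωV p.1 q.1 + ωW p.2 q.2 :=
  rfl

theorem LinearMap.BilinForm.orthogonal_neg (B : LinearMap.BilinForm k V) (N : Submodule k V) :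
    (-B).orthogonal N = B.orthogonal N := by
  ext
  simp [BilinForm.mem_orthogonal_iff]

theorem LinearMap.BilinForm.orthogonal_sup (B : LinearMap.BilinForm k V) (P Q : Submodule k V) :
    B.orthogonal (P ⊔ Q) = B.orthogonal P ⊓ B.orthogonal Q := by
  refine le_antisymm (le_inf (B.orthogonal_le le_sup_left) (B.orthogonal_le le_sup_right)) ?_
  rintro v ⟨hvP, hvQ⟩ _ hn
  obtain ⟨p, hp, q, hq, rfl⟩ := Submodule.mem_sup.mp hn
  simp [hvP p hp, hvQ q hq]

theorem isAlt_prodForm (hV : ωV.IsAlt) (hW : ωW.IsAlt) : (prodForm ωV ωW).IsAlt := fun p ↦ by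
  simp [hV.self_eq_zero, hW.self_eq_zero]

theorem separatingRight_prodForm (hV : SeparatingRight ωV) (hW : SeparatingRight ωW) :
    SeparatingRight (prodForm ωV ωW) := fun p hp ↦
  Prod.ext (hV _ fun v ↦ by simpa using hp (v, 0)) (hW _ fun w ↦ by simpa using hp (0, w))

theorem nondegenerate_prodForm_neg (hV : ωV.IsAlt) (hV' : SeparatingRight ωV) (hW : ωW.IsAlt)
    (hW' : SeparatingRight ωW) : (prodForm (-ωV) ωW).Nondegenerate :=
  (isAlt_prodForm hV.neg hW).isRefl.nondegenerate_iff_separatingRight.mpr <|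
    separatingRight_prodForm (fun v h ↦ hV' v fun u ↦ neg_eq_zero.mp (h u)) hW'

theorem IsIsotropic.relComp {L : Submodule k (U × V)} {M : Submodule k (V × W)}
    (hL : IsIsotropic (prodForm (-ωU) ωV) L) (hM : IsIsotropic (prodForm (-ωV) ωW) M) :
    IsIsotropic (prodForm (-ωU) ωW) (L.relComp M) := by
  rintro ⟨u, w⟩ ⟨v, huv, hvw⟩ ⟨u', w'⟩ ⟨v', huv', hvw'⟩
  have h₁ := hL _ huv _ huv'
  have h₂ := hM _ hvw _ hvw'
  simp only [prodForm_apply, LinearMap.neg_apply] at h₁ h₂ ⊢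
  linear_combination h₁ + h₂

theorem IsLagrangian.orthogonal_eq [FiniteDimensional k V] {B : LinearMap.BilinForm k V}
    (hB : B.Nondegenerate) {L : Submodule k V} (hL : IsLagrangian B L) : B.orthogonal L = L := by
  have hle : L ≤ B.orthogonal L := fun v hv u hu ↦ hL.1 u hu v hv
  refine (Submodule.eq_of_le_of_finrank_le hle ?_).symm
  rw [BilinForm.finrank_orthogonal hB]
  have := hL.2
  omega

theorem comap_inr_eq_orthogonal_map_snd {L : Submodule k (V × W)}
    (hL : (prodForm ωV ωW).orthogonal L = L) :
    L.comap (inr k V W) = ωW.orthogonal (L.map (snd k V W)) := by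
  conv_lhs => rw [← hL]
  ext w
  simp [BilinForm.mem_orthogonal_iff, forall_comm (α := V)]

theorem comap_inl_eq_orthogonal_map_fst {L : Submodule k (V × W)}
    (hL : (prodForm ωV ωW).orthogonal L = L) :
    L.comap (inl k V W) = ωV.orthogonal (L.map (fst k V W)) := by
  conv_lhs => rw [← hL]
  ext v
  simp [BilinForm.mem_orthogonal_iff]

theorem finrank_relComp_of_orthogonal_eq [FiniteDimensional k U] [FiniteDimensional k V]
    [FiniteDimensional k W] (hωV : ωV.Nondegenerate) {L : Submodule k (U × V)}
    {M : Submodule k (V × W)} (hL : (prodForm ωU ωV).orthogonal L = L)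
    (hM : (prodForm (-ωV) ωW).orthogonal M = M) :
    finrank k (L.relComp M) + finrank k V = finrank k L + finrank k M := by
  have hK : L.comap (inr k U V) ⊓ M.comap (inl k V W) =
      ωV.orthogonal (L.map (snd k U V) ⊔ M.map (fst k V W)) := by
    rw [comap_inr_eq_orthogonal_map_snd hL, comap_inl_eq_orthogonal_map_fst hM,
      BilinForm.orthogonal_neg, BilinForm.orthogonal_sup]
  have h := finrank_relComp_add L M
  rw [hK, BilinForm.finrank_orthogonal hωV] at h
  have := (L.map (snd k U V) ⊔ M.map (fst k V W)).finrank_le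
  omega

end Forms

/-- Linear Lagrangian relations are closed under relational composition:
if `L` is Lagrangian in `V̄ ⊕ V'` and `M` is Lagrangian in `V̄' ⊕ V''`, then the
relational composite `M ∘ L` is a Lagrangian subspace of `V̄ ⊕ V''`. -/
theorem lagrangian_relations_closed_under_composition
    {k V V' V'' : Type*} [Field k]
    [AddCommGroup V] [Module k V] [FiniteDimensional k V]
    [AddCommGroup V'] [Module k V'] [FiniteDimensional k V']
    [AddCommGroup V''] [Module k V''] [FiniteDimensional k V'']
    (ω : LinearMap.BilinForm k V) (ω' : LinearMap.BilinForm k V')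
    (ω'' : LinearMap.BilinForm k V'')
    (halt : ∀ v, ω v v = 0) (hnd : ∀ v, (∀ u, ω u v = 0) → v = 0)
    (halt' : ∀ v, ω' v v = 0) (hnd' : ∀ v, (∀ u, ω' u v = 0) → v = 0)
    (halt'' : ∀ v, ω'' v v = 0) (hnd'' : ∀ v, (∀ u, ω'' u v = 0) → v = 0)
    (L : Submodule k (V × V')) (M : Submodule k (V' × V''))
    (hL : IsLagrangian (prodForm (-ω) ω') L)
    (hM : IsLagrangian (prodForm (-ω') ω'') M) :
    ∃ N : Submodule k (V × V''),
      (N : Set (V × V'')) = {p : V × V'' | ∃ v : V', (p.1, v) ∈ L ∧ (v, p.2) ∈ M} ∧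
      IsLagrangian (prodForm (-ω) ω'') N := by
  have hω' : ω'.Nondegenerate :=
    (BilinForm.IsAlt.isRefl halt').nondegenerate_iff_separatingRight.mpr hnd'
  have hL' := hL.orthogonal_eq (nondegenerate_prodForm_neg halt hnd halt' hnd')
  have hM' := hM.orthogonal_eq (nondegenerate_prodForm_neg halt' hnd' halt'' hnd'')
  refine ⟨L.relComp M, rfl, hL.1.relComp hM.1, ?_⟩
  have hdim := finrank_relComp_of_orthogonal_eq hω' hL' hM'
  have hdimL := hL.2
  have hdimM := hM.2
  rw [finrank_prod] at hdimL hdimM ⊢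
  omega
end

section
/- Let k be a field. The subspace K(μ) = {((φ₁,I₁),(φ₂,I₂),(φ₃,I₃)) : φ₁ = φ₂ = φ₃ and I₁ + I₂ = I₃} is a Lagrangian subspace of (conjugate of (k ⊕ k) ⊕ (k ⊕ k)) ⊕ (k ⊕ k); that is, the black-boxing of the multiplication generator is a linear Lagrangian relation from (k ⊕ k)² to k ⊕ k. -/
open Module

/-- The standard symplectic form on `k ⊕ k`: `ω((φ,I),(φ',I')) = φI' − φ'I`. -/
noncomputable def stdForm (k : Type*) [Field k] : LinearMap.BilinForm k (k × k) :=
  LinearMap.mk₂ k (fun p q => p.1 * q.2 - q.1 * p.2)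
    (fun m₁ m₂ n => by simp; ring)
    (fun c m n => by simp; ring)
    (fun m n₁ n₂ => by simp; ring)
    (fun c m n => by simp; ring)

/-- The black-boxing of the multiplication generator,
`K(μ) = {((φ₁,I₁),(φ₂,I₂),(φ₃,I₃)) : φ₁ = φ₂ = φ₃, I₁ + I₂ = I₃}`, is a
Lagrangian subspace of `(conjugate of (k ⊕ k) ⊕ (k ⊕ k)) ⊕ (k ⊕ k)`. -/
theorem blackbox_mul_isLagrangian (k : Type*) [Field k] :
    ∃ N : Submodule k (((k × k) × (k × k)) × (k × k)),
      (N : Set (((k × k) × (k × k)) × (k × k))) =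
        {p : ((k × k) × (k × k)) × (k × k) |
          p.1.1.1 = p.1.2.1 ∧ p.1.2.1 = p.2.1 ∧ p.1.1.2 + p.1.2.2 = p.2.2} ∧
      IsLagrangian (prodForm (-(prodForm (stdForm k) (stdForm k))) (stdForm k)) N := by
  classical
  let f : (k × k × k) →ₗ[k] (((k × k) × (k × k)) × (k × k)) :=
    { toFun := fun x => (((x.1, x.2.1), (x.1, x.2.2)), (x.1, x.2.1 + x.2.2))
      map_add' := fun x y => by simp [Prod.ext_iff]; ring
      map_smul' := fun c x => by simp [Prod.ext_iff, mul_add] }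
  have hf : Function.Injective f := by
    intro x y h
    simp only [f, LinearMap.coe_mk, AddHom.coe_mk, Prod.ext_iff] at h
    obtain ⟨⟨⟨h1, h2⟩, _, h3⟩, _⟩ := h
    exact Prod.ext h1 (Prod.ext h2 h3)
  refine ⟨LinearMap.range f, ?_, ?_, ?_⟩
  · ext p
    constructor
    · rintro ⟨x, rfl⟩
      simp [f]
    · rintro ⟨h1, h2, h3⟩
      exact ⟨(p.1.1.1, p.1.1.2, p.1.2.2), by
        simp only [f, LinearMap.coe_mk, AddHom.coe_mk]
        ext <;> simp [h1, h2.symm, h3] ⟩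
  · rintro u ⟨x, rfl⟩ v ⟨y, rfl⟩
    simp [f, prodForm, stdForm]
    ring
  · rw [LinearMap.finrank_range_of_inj hf]
    simp
end

section
/- Let k be a field. The subspace K(δ) = {((φ₁,I₁),(φ₂,I₂),(φ₃,I₃)) : φ₁ = φ₂ = φ₃ and I₁ = I₂ + I₃} is a Lagrangian subspace of (conjugate of k ⊕ k) ⊕ ((k ⊕ k) ⊕ (k ⊕ k)); that is, the black-boxing of the comultiplication generator is a linear Lagrangian relation from k ⊕ k to (k ⊕ k)². -/
open Module

noncomputable def comulMap (k : Type*) [Field k] :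
    (k × k × k) →ₗ[k] ((k × k) × ((k × k) × (k × k))) where
  toFun x := ((x.1, x.2.1 + x.2.2), ((x.1, x.2.1), (x.1, x.2.2)))
  map_add' x y := by simp [Prod.ext_iff]; ring
  map_smul' c x := by simp [Prod.ext_iff, smul_add]; ring

/-- The black-boxing of the comultiplication generator,
`K(δ) = {((φ₁,I₁),(φ₂,I₂),(φ₃,I₃)) : φ₁ = φ₂ = φ₃, I₁ = I₂ + I₃}`, is a
Lagrangian subspace of `(conjugate of k ⊕ k) ⊕ ((k ⊕ k) ⊕ (k ⊕ k))`. -/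
theorem blackbox_comul_isLagrangian (k : Type*) [Field k] :
    ∃ N : Submodule k ((k × k) × ((k × k) × (k × k))),
      (N : Set ((k × k) × ((k × k) × (k × k)))) =
        {p : (k × k) × ((k × k) × (k × k)) |
          p.1.1 = p.2.1.1 ∧ p.2.1.1 = p.2.2.1 ∧ p.1.2 = p.2.1.2 + p.2.2.2} ∧
      IsLagrangian (prodForm (-(stdForm k)) (prodForm (stdForm k) (stdForm k))) N := by
  refine ⟨LinearMap.range (comulMap k), ?_, ?_, ?_⟩
  · ext p
    simp only [SetLike.mem_coe, LinearMap.mem_range, Set.mem_setOf_eq]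
    constructor
    · rintro ⟨x, rfl⟩
      simp [comulMap]
    · rintro ⟨h1, h2, h3⟩
      exact ⟨(p.1.1, p.2.1.2, p.2.2.2), by
        obtain ⟨⟨a,b⟩,⟨c,d⟩,⟨e,f⟩⟩ := p
        simp_all [comulMap, Prod.ext_iff]⟩
  · rintro u ⟨x, rfl⟩ v ⟨y, rfl⟩
    simp [comulMap, prodForm, stdForm]
    ring
  · have hinj : Function.Injective (comulMap k) := by
      intro x y h
      simp only [comulMap, LinearMap.coe_mk, AddHom.coe_mk, Prod.ext_iff] at h
      obtain ⟨⟨h1, _⟩, ⟨_, h2⟩, ⟨_, h3⟩⟩ := h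
      exact Prod.ext h1 (Prod.ext h2 h3)
    have := LinearMap.finrank_range_of_inj hinj
    rw [this]
    simp [finrank_prod]
end

section
/- Let k be a field. For every Z ∈ k, the subspace ■(Z) = {((φ₁,I₁),(φ₂,I₂)) : φ₂ − φ₁ = Z·I₁ and I₁ = I₂} is a two-dimensional isotropic, hence Lagrangian, subspace of (conjugate of k ⊕ k) ⊕ (k ⊕ k); that is, the black-boxing of a circuit element of impedance Z is a linear Lagrangian relation from k ⊕ k to itself. -/
open Module

/-- The impedance-Z relation as a submodule. -/
def boxZ (k : Type*) [Field k] (Z : k) : Submodule k ((k × k) × (k × k)) where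
  carrier := {p : (k × k) × (k × k) | p.2.1 - p.1.1 = Z * p.1.2 ∧ p.1.2 = p.2.2}
  add_mem' := by
    rintro ⟨⟨a,b⟩,⟨c,d⟩⟩ ⟨⟨a',b'⟩,⟨c',d'⟩⟩ ⟨h1,h2⟩ ⟨h1',h2'⟩
    simp only [Set.mem_setOf_eq, Prod.fst_add, Prod.snd_add] at *
    constructor
    · linear_combination h1 + h1'
    · linear_combination h2 + h2'
  zero_mem' := by simp
  smul_mem' := by
    rintro c ⟨⟨a,b⟩,⟨u,v⟩⟩ ⟨h1,h2⟩
    simp only [Set.mem_setOf_eq, Prod.smul_fst, Prod.smul_snd, smul_eq_mul] at *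
    constructor
    · linear_combination c * h1
    · linear_combination c * h2

/-- Parametrization of boxZ. -/
noncomputable def boxZequiv (k : Type*) [Field k] (Z : k) : (k × k) ≃ₗ[k] boxZ k Z where
  toFun p := ⟨((p.1, p.2), (p.1 + Z * p.2, p.2)), by constructor <;> simp⟩
  map_add' p q := by ext <;> simp <;> ring
  map_smul' c p := by ext <;> simp <;> ring
  invFun q := (q.1.1.1, q.1.1.2)
  left_inv p := rfl
  right_inv q := by
    obtain ⟨⟨⟨a,b⟩,⟨c,d⟩⟩, h1, h2⟩ := q
    simp only at h1 h2
    apply Subtype.ext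
    have hc : a + Z * b = c := by linear_combination -h1
    simp only
    rw [hc, h2]

lemma boxZ_isotropic (k : Type*) [Field k] (Z : k) :
    IsIsotropic (prodForm (-(stdForm k)) (stdForm k)) (boxZ k Z) := by
  rintro ⟨⟨a,b⟩,⟨c,d⟩⟩ ⟨h1,h2⟩ ⟨⟨a',b'⟩,⟨c',d'⟩⟩ ⟨h1',h2'⟩
  simp only at h1 h2 h1' h2'
  subst h2 h2'
  simp [prodForm, stdForm]
  linear_combination b' * h1 - b * h1'

/-- For every impedance `Z ∈ k`, the set
`■(Z) = {((φ₁,I₁),(φ₂,I₂)) : φ₂ − φ₁ = Z·I₁, I₁ = I₂}` is a two-dimensional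
isotropic, hence Lagrangian, subspace of `(conjugate of k ⊕ k) ⊕ (k ⊕ k)`. -/
theorem blackbox_impedance_isLagrangian (k : Type*) [Field k] (Z : k) :
    ∃ N : Submodule k ((k × k) × (k × k)),
      (N : Set ((k × k) × (k × k))) =
        {p : (k × k) × (k × k) | p.2.1 - p.1.1 = Z * p.1.2 ∧ p.1.2 = p.2.2} ∧
      Module.finrank k ↥N = 2 ∧
      IsIsotropic (prodForm (-(stdForm k)) (stdForm k)) N ∧
      IsLagrangian (prodForm (-(stdForm k)) (stdForm k)) N := by
  have hrank : Module.finrank k ↥(boxZ k Z) = 2 :=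
    (boxZequiv k Z).symm.finrank_eq.trans (by simp)
  exact ⟨boxZ k Z, rfl, hrank, boxZ_isotropic k Z,
    boxZ_isotropic k Z, by rw [hrank]; simp⟩
end

section
/- Let k = ℝ(s) be the field of rational functions in one variable s over ℝ. For all positive real numbers R, L, C (regarded as constants in ℝ(s)), each of the following is a Lagrangian subspace of (conjugate of k ⊕ k) ⊕ (k ⊕ k): the resistor relation {((φ₁,I₁),(φ₂,I₂)) : φ₂ − φ₁ = R·I₁, I₁ = I₂}, the inductor relation {((φ₁,I₁),(φ₂,I₂)) : φ₂ − φ₁ = s·L·I₁, I₁ = I₂}, and the capacitor relation {((φ₁,I₁),(φ₂,I₂)) : s·C·(φ₂ − φ₁) = I₁, I₁ = I₂}. -/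
open Module

noncomputable def relMap (k : Type*) [Field k] (c : k) :
    ((k × k) × (k × k)) →ₗ[k] (k × k) where
  toFun p := (p.2.1 - p.1.1 - c * p.1.2, p.1.2 - p.2.2)
  map_add' p q := by simp [Prod.ext_iff]; constructor <;> ring
  map_smul' a p := by simp [Prod.ext_iff, smul_eq_mul]; constructor <;> ring

lemma key_lagrangian (c : RatFunc ℝ) :
    ∃ N : Submodule (RatFunc ℝ) ((RatFunc ℝ × RatFunc ℝ) × (RatFunc ℝ × RatFunc ℝ)),
      (N : Set ((RatFunc ℝ × RatFunc ℝ) × (RatFunc ℝ × RatFunc ℝ))) =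
        {p | p.2.1 - p.1.1 = c * p.1.2 ∧ p.1.2 = p.2.2} ∧
      IsLagrangian (prodForm (-(stdForm (RatFunc ℝ))) (stdForm (RatFunc ℝ))) N := by
  refine ⟨LinearMap.ker (relMap (RatFunc ℝ) c), ?_, ?_, ?_⟩
  · ext p
    simp [relMap, Prod.ext_iff, sub_sub, sub_eq_zero, sub_eq_iff_eq_add']
  · intro u hu v hv
    simp only [SetLike.mem_coe, LinearMap.mem_ker, relMap, LinearMap.coe_mk,
      AddHom.coe_mk, Prod.ext_iff, Prod.fst_zero, Prod.snd_zero, sub_sub,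
      sub_eq_zero] at hu hv
    obtain ⟨hu1, hu2⟩ := hu
    obtain ⟨hv1, hv2⟩ := hv
    simp [prodForm, stdForm, hu1, hv1, ← hu2, ← hv2]
    ring
  · have hsurj : Function.Surjective (relMap (RatFunc ℝ) c) := by
      intro ⟨x, y⟩
      exact ⟨((0, 0), (x, -y)), by simp [relMap]⟩
    have h := LinearMap.finrank_range_add_finrank_ker (relMap (RatFunc ℝ) c)
    rw [LinearMap.range_eq_top.mpr hsurj, finrank_top] at h
    have h2 : finrank (RatFunc ℝ) (RatFunc ℝ × RatFunc ℝ) = 2 := by simp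
    have h4 : finrank (RatFunc ℝ)
        ((RatFunc ℝ × RatFunc ℝ) × (RatFunc ℝ × RatFunc ℝ)) = 4 := by simp
    omega

/-- Over `k = ℝ(s)`, for positive reals `R`, `L`, `C`, the resistor relation
`{φ₂ − φ₁ = R·I₁, I₁ = I₂}`, the inductor relation `{φ₂ − φ₁ = s·L·I₁, I₁ = I₂}`
and the capacitor relation `{s·C·(φ₂ − φ₁) = I₁, I₁ = I₂}` are all Lagrangian
subspaces of `(conjugate of k ⊕ k) ⊕ (k ⊕ k)`. -/
theorem blackbox_RLC_isLagrangian (R L C : ℝ) (hR : 0 < R) (hL : 0 < L) (hC : 0 < C) :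
    (∃ N : Submodule (RatFunc ℝ) ((RatFunc ℝ × RatFunc ℝ) × (RatFunc ℝ × RatFunc ℝ)),
      (N : Set ((RatFunc ℝ × RatFunc ℝ) × (RatFunc ℝ × RatFunc ℝ))) =
        {p | p.2.1 - p.1.1 = RatFunc.C R * p.1.2 ∧ p.1.2 = p.2.2} ∧
      IsLagrangian (prodForm (-(stdForm (RatFunc ℝ))) (stdForm (RatFunc ℝ))) N) ∧
    (∃ N : Submodule (RatFunc ℝ) ((RatFunc ℝ × RatFunc ℝ) × (RatFunc ℝ × RatFunc ℝ)),
      (N : Set ((RatFunc ℝ × RatFunc ℝ) × (RatFunc ℝ × RatFunc ℝ))) =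
        {p | p.2.1 - p.1.1 = RatFunc.X * RatFunc.C L * p.1.2 ∧ p.1.2 = p.2.2} ∧
      IsLagrangian (prodForm (-(stdForm (RatFunc ℝ))) (stdForm (RatFunc ℝ))) N) ∧
    (∃ N : Submodule (RatFunc ℝ) ((RatFunc ℝ × RatFunc ℝ) × (RatFunc ℝ × RatFunc ℝ)),
      (N : Set ((RatFunc ℝ × RatFunc ℝ) × (RatFunc ℝ × RatFunc ℝ))) =
        {p | RatFunc.X * RatFunc.C C * (p.2.1 - p.1.1) = p.1.2 ∧ p.1.2 = p.2.2} ∧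
      IsLagrangian (prodForm (-(stdForm (RatFunc ℝ))) (stdForm (RatFunc ℝ))) N) := by
  refine ⟨key_lagrangian _, key_lagrangian _, ?_⟩
  have ha : (RatFunc.X * RatFunc.C C : RatFunc ℝ) ≠ 0 :=
    mul_ne_zero RatFunc.X_ne_zero (by simpa using hC.ne')
  obtain ⟨N, hN, hL⟩ := key_lagrangian ((RatFunc.X * RatFunc.C C : RatFunc ℝ))⁻¹
  refine ⟨N, ?_, hL⟩
  rw [hN]
  ext p
  simp only [Set.mem_setOf_eq, and_congr_left_iff]
  intro _
  rw [eq_comm, inv_mul_eq_iff_eq_mul₀ ha, eq_comm]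
end

section
/- Let k be a field. For every V₀ ∈ k, the voltage-source set ■(V₀) = {((φ₁,I₁),(φ₂,I₂)) : φ₂ − φ₁ = V₀ and I₁ = I₂} is a nonempty affine subspace of (conjugate of k ⊕ k) ⊕ (k ⊕ k) equal to ((0,0),(V₀,0)) + {((φ,I),(φ,I)) : φ, I ∈ k}, and its direction {((φ,I),(φ,I))} is a Lagrangian subspace; hence ■(V₀) is a Lagrangian affine relation from k ⊕ k to itself. -/
open Module

/-- A subset of a vector space is an affine subspace if it is closed under
affine combinations. -/
def IsAffineSubspace {k E : Type*} [Field k] [AddCommGroup E] [Module k E]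
    (A : Set E) : Prop :=
  ∀ a ∈ A, ∀ b ∈ A, ∀ t : k, t • a + (1 - t) • b ∈ A

/-- The direction of a subset of a vector space: the set of differences of its
elements. -/
def dirSet {E : Type*} [AddCommGroup E] (R : Set E) : Set E :=
  {d : E | ∃ x ∈ R, ∃ y ∈ R, d = x - y}

/-- For every `V₀ ∈ k`, the voltage-source set
`■(V₀) = {((φ₁,I₁),(φ₂,I₂)) : φ₂ − φ₁ = V₀, I₁ = I₂}` is a nonempty affine
subspace of `(conjugate of k ⊕ k) ⊕ (k ⊕ k)`, equal to
`((0,0),(V₀,0)) + {((φ,I),(φ,I))}`, and its direction `{((φ,I),(φ,I))}` is a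
Lagrangian subspace; hence `■(V₀)` is a Lagrangian affine relation. -/
theorem voltage_source_isLagrangianAffine (k : Type*) [Field k] (V₀ : k) :
    ({p : (k × k) × (k × k) | p.2.1 - p.1.1 = V₀ ∧ p.1.2 = p.2.2}).Nonempty ∧
    IsAffineSubspace (k := k)
      {p : (k × k) × (k × k) | p.2.1 - p.1.1 = V₀ ∧ p.1.2 = p.2.2} ∧
    {p : (k × k) × (k × k) | p.2.1 - p.1.1 = V₀ ∧ p.1.2 = p.2.2} =
      (fun q => (((0 : k), (0 : k)), (V₀, (0 : k))) + q) ''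
        {p : (k × k) × (k × k) | p.1 = p.2} ∧
    dirSet {p : (k × k) × (k × k) | p.2.1 - p.1.1 = V₀ ∧ p.1.2 = p.2.2} =
      {p : (k × k) × (k × k) | p.1 = p.2} ∧
    ∃ D : Submodule k ((k × k) × (k × k)),
      (D : Set ((k × k) × (k × k))) = {p : (k × k) × (k × k) | p.1 = p.2} ∧
      IsLagrangian (prodForm (-(stdForm k)) (stdForm k)) D := by
  constructor
  · exact ⟨((0,0),(V₀,0)), by simp⟩
  constructor
  · rintro ⟨⟨a1,a2⟩,⟨a3,a4⟩⟩ ⟨ha1,ha2⟩ ⟨⟨b1,b2⟩,⟨b3,b4⟩⟩ ⟨hb1,hb2⟩ t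
    simp only [Set.mem_setOf_eq, Prod.smul_mk, smul_eq_mul, Prod.mk_add_mk] at *
    constructor
    · have : t * a3 + (1-t) * b3 - (t * a1 + (1-t) * b1)
          = t * (a3 - a1) + (1-t) * (b3 - b1) := by ring
      rw [this, ha1, hb1]; ring
    · rw [ha2, hb2]
  constructor
  · ext ⟨⟨a1,a2⟩,⟨a3,a4⟩⟩
    simp only [Set.mem_setOf_eq, Set.mem_image, Prod.mk_add_mk, Prod.mk.injEq, Prod.exists]
    constructor
    · rintro ⟨h1, h2⟩
      exact ⟨a1, a2, a1, a2, ⟨rfl, rfl⟩, ⟨by ring, by ring⟩,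
        ⟨by linear_combination -h1, by linear_combination h2⟩⟩
    · rintro ⟨x1, x2, y1, y2, ⟨rfl, rfl⟩, ⟨e1, e2⟩, e3, e4⟩
      exact ⟨by linear_combination e1 - e3, by linear_combination e4 - e2⟩
  constructor
  · ext ⟨⟨a1,a2⟩,⟨a3,a4⟩⟩
    simp only [dirSet, Set.mem_setOf_eq]
    constructor
    · rintro ⟨⟨⟨x1,x2⟩,⟨x3,x4⟩⟩, ⟨hx1,hx2⟩, ⟨⟨y1,y2⟩,⟨y3,y4⟩⟩, ⟨hy1,hy2⟩, h⟩
      simp only [Set.mem_setOf_eq, Prod.mk_sub_mk, Prod.mk.injEq] at *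
      obtain ⟨⟨e1,e2⟩,⟨e3,e4⟩⟩ := h
      subst e1 e2 e3 e4
      refine ⟨?_, ?_⟩
      · linear_combination hy1 - hx1
      · rw [hx2, hy2]
    · intro h
      refine ⟨((a1, a2), (a1 + V₀, a2)), ⟨by ring, rfl⟩, ((0,0),(V₀,0)), ⟨by ring, rfl⟩, ?_⟩
      rw [← h]
      simp [Prod.ext_iff]
  · refine ⟨LinearMap.graph (LinearMap.id : (k × k) →ₗ[k] (k × k)), ?_, ?_, ?_⟩
    · ext p
      simp [LinearMap.mem_graph_iff, eq_comm]
    · rintro ⟨u1, u2⟩ hu ⟨v1, v2⟩ hv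
      simp only [LinearMap.mem_graph_iff, LinearMap.id_coe, id_eq] at hu hv
      subst hu hv
      simp [prodForm, stdForm]
    · have hinj : Function.Injective
          ((LinearMap.id).prod (LinearMap.id : (k × k) →ₗ[k] (k × k))) := by
        intro x y h
        simpa using congrArg Prod.fst h
      have h1 : Module.finrank k ↥(LinearMap.graph (LinearMap.id : (k × k) →ₗ[k] (k × k)))
          = Module.finrank k (k × k) := by
        rw [LinearMap.graph_eq_range_prod,
          (LinearEquiv.ofInjective _ hinj).finrank_eq.symm]
      rw [h1]
      simp [Module.finrank_prod]
end

section
/- (Power's factorization lemma, part 2.) Let h : A ⥤ B, u : A ⥤ C, v : B ⥤ D, g : C ⥤ D be functors with h bijective on objects and g fully faithful, and let α : h ⋙ v ≅ u ⋙ g be a natural isomorphism. Then there exists a unique pair consisting of a functor w : B ⥤ C and a natural transformation β : v ⟶ w ⋙ g such that h ⋙ w = u and the whiskering of β by h equals the underlying natural transformation of α. Moreover, this β is a natural isomorphism. -/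
/-!
Any solution `β` is invertible: its components over the image of `h` are those of `α`, and
every object of `B` lies in that image. Since `g` is fully faithful, a functor `w : B ⥤ C`
together with an isomorphism `v ≅ w ⋙ g` amounts to a family, indexed by the objects `b`, of
objects `c` with isomorphisms `g c ≅ v b`; the action of `w` on morphisms is forced by
conjugation. Whiskering by `h` becomes restriction of such families along `h.obj`, a bijection
because `h` is bijective on objects, and `α` is such a family over `A`; so it extends uniquely
to `B`.
-/

open CategoryTheory

universe v₁ v₂ v₃ v₄ u₁ u₂ u₃ u₄

lemma CategoryTheory.NatTrans.hext {B : Type u₂} {D : Type u₄} [Category.{v₂} B]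
    [Category.{v₄} D] {F G G' : B ⥤ D} (hG : G = G') {τ : F ⟶ G} {σ : F ⟶ G'}
    (h : ∀ b, HEq (τ.app b) (σ.app b)) : HEq τ σ := by
  subst hG
  exact heq_of_eq (NatTrans.ext (funext fun b => eq_of_heq (h b)))

namespace CategoryTheory.Functor

variable {A : Type u₁} {B : Type u₂} {C : Type u₃} {D : Type u₄}
  [Category.{v₁} A] [Category.{v₂} B] [Category.{v₃} C] [Category.{v₄} D]

lemma isIso_of_isIso_whiskerLeft {h : A ⥤ B} (hh : Function.Surjective h.obj) {F G : B ⥤ D}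
    (τ : F ⟶ G) [IsIso (whiskerLeft h τ)] : IsIso τ := by
  have (b : B) : IsIso (τ.app b) := by
    obtain ⟨a, rfl⟩ := hh b
    exact inferInstanceAs (IsIso ((whiskerLeft h τ).app a))
  exact NatIso.isIso_of_isIso_app τ

section Pointwise

variable {g : C ⥤ D} {F : B ⥤ D}

abbrev pointwiseLifts {w : B ⥤ C} (β : F ≅ w ⋙ g) (b : B) : Σ c : C, g.obj c ≅ F.obj b :=
  ⟨w.obj b, (β.app b).symm⟩

variable (g F) [g.Full] [g.Faithful]

@[simps obj]
noncomputable def liftOfPointwise (L : ∀ b, Σ c : C, g.obj c ≅ F.obj b) : B ⥤ C where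
  obj b := (L b).1
  map {b b'} f := g.preimage ((L b).2.hom ≫ F.map f ≫ (L b').2.inv)
  map_id b := g.map_injective (by simp)
  map_comp f f' := g.map_injective (by simp)

@[simp]
lemma map_liftOfPointwise_map (L : ∀ b, Σ c : C, g.obj c ≅ F.obj b) {b b' : B} (f : b ⟶ b') :
    g.map ((liftOfPointwise g F L).map f) = (L b).2.hom ≫ F.map f ≫ (L b').2.inv := by
  simp [liftOfPointwise]

noncomputable def liftOfPointwiseCompIso (L : ∀ b, Σ c : C, g.obj c ≅ F.obj b) :
    liftOfPointwise g F L ⋙ g ≅ F :=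
  NatIso.ofComponents (fun b => (L b).2) fun f => by simp [liftOfPointwise]

noncomputable abbrev liftPairOfPointwise (L : ∀ b, Σ c : C, g.obj c ≅ F.obj b) :
    Σ w : B ⥤ C, F ⟶ w ⋙ g :=
  ⟨liftOfPointwise g F L, (liftOfPointwiseCompIso g F L).inv⟩

lemma liftPairOfPointwise_pointwiseLifts {w : B ⥤ C} (β : F ≅ w ⋙ g) :
    liftPairOfPointwise g F (pointwiseLifts β) = ⟨w, β.hom⟩ := by
  have hw : liftOfPointwise g F (pointwiseLifts β) = w :=
    Functor.hext (fun _ => rfl) fun b b' f => heq_of_eq <| g.map_injective (by simp; rfl)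
  exact Sigma.ext hw (NatTrans.hext (congrArg (· ⋙ g) hw) fun _ => HEq.rfl)

end Pointwise

end CategoryTheory.Functor

open Functor in
/-- Power's factorization lemma, part 2: given a square commuting up to a
natural isomorphism `α : h ⋙ v ≅ u ⋙ g`, where `h` is bijective on objects
and `g` is fully faithful, there is a unique pair `(w, β)` consisting of a
functor `w : B ⥤ C` and a natural transformation `β : v ⟶ w ⋙ g` such that
`h ⋙ w = u` and the whiskering of `β` by `h` equals `α.hom`; moreover any such
`β` is a natural isomorphism. -/
theorem power_factorization_unique_lift
    {A : Type u₁} {B : Type u₂} {C : Type u₃} {D : Type u₄}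
    [Category.{v₁} A] [Category.{v₂} B] [Category.{v₃} C] [Category.{v₄} D]
    (h : A ⥤ B) (u : A ⥤ C) (v : B ⥤ D) (g : C ⥤ D)
    (hbo : Function.Bijective h.obj) [g.Full] [g.Faithful]
    (α : h ⋙ v ≅ u ⋙ g) :
    (∃! p : Σ w : B ⥤ C, v ⟶ w ⋙ g,
        h ⋙ p.1 = u ∧ HEq (Functor.whiskerLeft h p.2) α.hom) ∧
    ∀ p : Σ w : B ⥤ C, v ⟶ w ⋙ g,
      (h ⋙ p.1 = u ∧ HEq (Functor.whiskerLeft h p.2) α.hom) → IsIso p.2 := by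
  let extend := (Equiv.ofBijective h.obj hbo).piCongrLeft fun b => Σ c : C, g.obj c ≅ v.obj b
  let L := extend (pointwiseLifts α)
  have hL : (fun a => L (h.obj a)) = pointwiseLifts α :=
    funext (Equiv.piCongrLeft_apply_apply _ (Equiv.ofBijective h.obj hbo) _)
  have solution : h ⋙ liftOfPointwise g v L = u ∧
      HEq (whiskerLeft h (liftOfPointwiseCompIso g v L).inv) α.hom := by
    -- whiskering the pair built from `L` by `h` is, definitionally, the pair built from `L ∘ h.obj`
    refine Sigma.mk.inj_iff.mp (?_ : liftPairOfPointwise g (h ⋙ v) (fun a => L (h.obj a)) = _)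
    rw [hL, liftPairOfPointwise_pointwiseLifts]
  have unique (p : Σ w : B ⥤ C, v ⟶ w ⋙ g)
      (hp : h ⋙ p.1 = u ∧ HEq (whiskerLeft h p.2) α.hom) :
      IsIso p.2 ∧ p = liftPairOfPointwise g v L := by
    obtain ⟨w, β⟩ := p
    obtain ⟨rfl, hβ⟩ := hp
    replace hβ : whiskerLeft h β = α.hom := eq_of_heq hβ
    have : IsIso (whiskerLeft h β) := hβ ▸ inferInstance
    have : IsIso β := isIso_of_isIso_whiskerLeft hbo.2 β
    obtain rfl : α = isoWhiskerLeft h (asIso β) := Iso.ext hβ.symm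
    refine ⟨this, (liftPairOfPointwise_pointwiseLifts g v (asIso β)).symm.trans ?_⟩
    exact congrArg (liftPairOfPointwise g v) (extend.symm_apply_eq.mp rfl)
  exact ⟨⟨_, solution, fun p hp => (unique p hp).2⟩, fun p hp => (unique p hp).1⟩
end

section
/- Let C be a monoidal category and suppose x and y are objects each equipped with a Frobenius monoid structure: morphisms μ_x : x ⊗ x → x, ι_x : 𝟙 → x, δ_x : x → x ⊗ x, ε_x : x → 𝟙 satisfying the associativity and unit laws for a monoid, the coassociativity and counit laws for a comonoid, and the Frobenius law (x ⊗ μ) ∘ (associator) ∘ (δ ⊗ x) = δ ∘ μ = (μ ⊗ x) ∘ (inverse associator) ∘ (x ⊗ δ), and similarly for y. If f : x → y is a morphism preserving all four structure maps (f ∘ μ_x = μ_y ∘ (f ⊗ f), f ∘ ι_x = ι_y, δ_y ∘ f = (f ⊗ f) ∘ δ_x, ε_y ∘ f = ε_x), then f is an isomorphism. -/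
open CategoryTheory MonoidalCategory

/-!
A Frobenius monoid is self-dual: the Frobenius law turns the cup `ι ≫ δ` and the cap `μ ≫ ε` into
a pair satisfying a snake identity. A morphism `f` of Frobenius monoids preserves cup and cap, so
its transpose `g` with respect to these dualities is a two-sided inverse: sliding `f` along the
string reduces `f ≫ g` to the snake identity of `x` (via the caps) and `g ≫ f` to that of `y`
(via the cups).
-/

/-- A Frobenius monoid structure on an object `x` of a monoidal category:
a monoid structure `(mul, one)`, a comonoid structure `(comul, counit)`,
and the Frobenius law relating them. -/
structure FrobeniusStructure {C : Type*} [Category C] [MonoidalCategory C]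
    (x : C) where
  mul : x ⊗ x ⟶ x
  one : 𝟙_ C ⟶ x
  comul : x ⟶ x ⊗ x
  counit : x ⟶ 𝟙_ C
  mul_assoc : (mul ▷ x) ≫ mul = (α_ x x x).hom ≫ (x ◁ mul) ≫ mul
  one_mul : (one ▷ x) ≫ mul = (λ_ x).hom
  mul_one : (x ◁ one) ≫ mul = (ρ_ x).hom
  comul_assoc : comul ≫ (comul ▷ x) ≫ (α_ x x x).hom = comul ≫ (x ◁ comul)
  counit_comul : comul ≫ (counit ▷ x) = (λ_ x).inv
  comul_counit : comul ≫ (x ◁ counit) = (ρ_ x).inv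
  frobenius_left : (comul ▷ x) ≫ (α_ x x x).hom ≫ (x ◁ mul) = mul ≫ comul
  frobenius_right : (x ◁ comul) ≫ (α_ x x x).inv ≫ (mul ▷ x) = mul ≫ comul

section
variable {C : Type*} [Category C] [MonoidalCategory C]

/-- A snake identity for a cup `η` and a cap `ε` is the equation `zigzag η ε = 𝟙 _`. -/
def zigzag {a b d : C} (η : 𝟙_ C ⟶ a ⊗ b) (ε : b ⊗ d ⟶ 𝟙_ C) : d ⟶ a :=
  (λ_ d).inv ≫ η ▷ d ≫ (α_ a b d).hom ≫ a ◁ ε ≫ (ρ_ a).hom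

lemma comp_zigzag {a b d d' : C} (η : 𝟙_ C ⟶ a ⊗ b) (ε : b ⊗ d ⟶ 𝟙_ C) (h : d' ⟶ d) :
    h ≫ zigzag η ε = zigzag η (b ◁ h ≫ ε) := by
  rw [zigzag, zigzag, leftUnitor_inv_naturality_assoc, whisker_exchange_assoc,
    associator_naturality_right_assoc, whiskerLeft_comp_assoc]

lemma zigzag_comp {a a' b d : C} (η : 𝟙_ C ⟶ a ⊗ b) (ε : b ⊗ d ⟶ 𝟙_ C) (h : a ⟶ a') :
    zigzag η ε ≫ h = zigzag (η ≫ h ▷ b) ε := by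
  simp only [zigzag, Category.assoc, ← rightUnitor_naturality, whisker_exchange_assoc,
    ← associator_naturality_left_assoc, comp_whiskerRight]

lemma zigzag_whiskerRight {a b b' d : C} (η : 𝟙_ C ⟶ a ⊗ b) (k : b ⟶ b') (ε : b' ⊗ d ⟶ 𝟙_ C) :
    zigzag η (k ▷ d ≫ ε) = zigzag (η ≫ a ◁ k) ε := by
  simp only [zigzag, whiskerLeft_comp, comp_whiskerRight, Category.assoc,
    associator_naturality_middle_assoc]

theorem isIso_of_preserves_cup_cap {x y : C} {ηx : 𝟙_ C ⟶ x ⊗ x} {εx : x ⊗ x ⟶ 𝟙_ C}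
    {ηy : 𝟙_ C ⟶ y ⊗ y} {εy : y ⊗ y ⟶ 𝟙_ C} (hx : zigzag ηx εx = 𝟙 x)
    (hy : zigzag ηy εy = 𝟙 y) (f : x ⟶ y) (hη : ηx ≫ (f ⊗ₘ f) = ηy)
    (hε : (f ⊗ₘ f) ≫ εy = εx) : IsIso f := by
  refine ⟨zigzag ηx (f ▷ y ≫ εy), ?_, ?_⟩
  · rw [comp_zigzag, ← Category.assoc, ← tensorHom_def', hε, hx]
  · rw [zigzag_comp, zigzag_whiskerRight, Category.assoc, ← MonoidalCategory.tensorHom_def, hη, hy]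

lemma FrobeniusStructure.zigzag_cup_cap {x : C} (F : FrobeniusStructure x) :
    zigzag (F.one ≫ F.comul) (F.mul ≫ F.counit) = 𝟙 x := by
  rw [zigzag, comp_whiskerRight, MonoidalCategory.whiskerLeft_comp]
  slice_lhs 3 5 => rw [F.frobenius_left]
  slice_lhs 4 5 => rw [F.comul_counit]
  slice_lhs 2 3 => rw [F.one_mul]
  simp

end

/-- Any morphism of Frobenius monoids — a morphism preserving the
multiplication, unit, comultiplication and counit — is an isomorphism. -/
theorem frobenius_monoid_hom_isIso {C : Type*} [Category C] [MonoidalCategory C]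
    {x y : C} (Fx : FrobeniusStructure x) (Fy : FrobeniusStructure y)
    (f : x ⟶ y)
    (hmul : (f ⊗ₘ f) ≫ Fy.mul = Fx.mul ≫ f)
    (hone : Fx.one ≫ f = Fy.one)
    (hcomul : f ≫ Fy.comul = Fx.comul ≫ (f ⊗ₘ f))
    (hcounit : f ≫ Fy.counit = Fx.counit) :
    IsIso f := by
  refine isIso_of_preserves_cup_cap Fx.zigzag_cup_cap Fy.zigzag_cup_cap f ?_ ?_
  · rw [Category.assoc, ← hcomul, ← Category.assoc, hone]
  · rw [← Category.assoc, hmul, Category.assoc, hcounit]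
end
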